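/- Let (F_n) and (G_k) be totally disjoint sequences of filters on X with equal contours H := Li F_n = Li G_k, and Δ := {(n,k) : F_n # G_k}. Then H equals the contour of the family {F_n ⊔ G_k : (n,k) ∈ Δ} along the cofinite filter on Δ, i.e., A ∈ H if and only if A ∈ F_n ⊔ G_k for all but finitely many (n,k) ∈ Δ. -/
import Mathlib


open Filter

/-- The contour (set-theoretic lower limit) of a sequence of filters:
`A ∈ contourSeq F` iff `A ∈ F n` for all sufficiently large `n`. -/
def contourSeq {X : Type*} (F : ℕ → Filter X) : Filter X := Filter.atTop.bind F

/-- Two filters mesh (`#`) if every member of the first intersects every member of the second. -/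
def Mesh {X : Type*} (F G : Filter X) : Prop := ∀ A ∈ F, ∀ B ∈ G, (A ∩ B).Nonempty

/-- A sequence of filters is totally disjoint if there are pairwise disjoint sets `A n ∈ F n`. -/
def TotallyDisjoint {X : Type*} (F : ℕ → Filter X) : Prop :=
  ∃ A : ℕ → Set X, (∀ n, A n ∈ F n) ∧ Pairwise fun m n => Disjoint (A m) (A n)

lemma mem_contourSeq {X : Type*} {F : ℕ → Filter X} {A : Set X} :
    A ∈ contourSeq F ↔ ∃ N, ∀ n ≥ N, A ∈ F n := by
  constructor
  · intro hA
    rw [contourSeq, Filter.mem_bind] at hA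
    obtain ⟨t, ht, hts⟩ := hA
    obtain ⟨N, hN⟩ := Filter.mem_atTop_sets.1 ht
    exact ⟨N, fun n hn => hts n (hN n hn)⟩
  · rintro ⟨N, hN⟩
    rw [contourSeq, Filter.mem_bind]
    exact ⟨Set.Ici N, Filter.mem_atTop N, fun n hn => hN n hn⟩

theorem contour_eq_contour_of_joins {X : Type*} (F G : ℕ → Filter X)
    (hF : TotallyDisjoint F) (hG : TotallyDisjoint G)
    (h : contourSeq F = contourSeq G) (A : Set X) :
    A ∈ contourSeq F ↔
      {p : ℕ × ℕ | Mesh (F p.1) (G p.2) ∧ A ∉ F p.1 ⊓ G p.2}.Finite := by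
  obtain ⟨a, haF, haD⟩ := hF
  obtain ⟨b, hbG, hbD⟩ := hG
  -- complements of the disjoint sets are in the contour
  have haH : ∀ m, (a m)ᶜ ∈ contourSeq G := by
    intro m
    rw [← h, mem_contourSeq]
    refine ⟨m + 1, fun n hn => mem_of_superset (haF n) fun x hx hx' => ?_⟩
    exact Set.disjoint_left.1 (haD (show m ≠ n by omega)) hx' hx
  have hbH : ∀ k, (b k)ᶜ ∈ contourSeq F := by
    intro k
    rw [h, mem_contourSeq]
    refine ⟨k + 1, fun n hn => mem_of_superset (hbG n) fun x hx hx' => ?_⟩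
    exact Set.disjoint_left.1 (hbD (show k ≠ n by omega)) hx' hx
  choose K1 hK1 using fun m => mem_contourSeq.1 (haH m)
  choose N1 hN1 using fun k => mem_contourSeq.1 (hbH k)
  constructor
  · -- easy direction
    intro hA
    obtain ⟨N, hN⟩ := mem_contourSeq.1 hA
    obtain ⟨K, hK⟩ := mem_contourSeq.1 (h ▸ hA)
    apply Set.Finite.subset ((Set.finite_Iio N).prod (Set.finite_Iio K))
    rintro ⟨n, k⟩ ⟨-, hnin⟩
    constructor
    · by_contra hn
      exact hnin (Filter.mem_inf_of_left (hN n (le_of_not_gt hn)))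
    · by_contra hk
      exact hnin (Filter.mem_inf_of_right (hK k (le_of_not_gt hk)))
  · -- hard direction
    intro hfin
    by_contra hA
    have hAG : A ∉ contourSeq G := h ▸ hA
    -- bound on the first coordinates of the bad set
    obtain ⟨N0, hN0⟩ : ∃ N0, ∀ p ∈ {p : ℕ × ℕ | Mesh (F p.1) (G p.2) ∧ A ∉ F p.1 ⊓ G p.2},
        p.1 < N0 := by
      obtain ⟨N0, hN0⟩ := (hfin.image Prod.fst).bddAbove
      exact ⟨N0 + 1, fun p hp => Nat.lt_succ_of_le (hN0 (Set.mem_image_of_mem _ hp))⟩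
    have hnb : ∀ m k, N0 ≤ m → Mesh (F m) (G k) → A ∈ F m ⊓ G k := by
      intro m k hm hmesh
      by_contra hmem
      exact absurd (hN0 (m, k) ⟨hmesh, hmem⟩) (by omega)
    -- witnesses
    have hwit : ∀ m k, ∃ C D, C ∈ F m ∧ D ∈ G k ∧
        ((K1 m ≤ k ∧ m < k) → ∀ x ∈ D, x ∉ a m) ∧
        (¬(K1 m ≤ k ∧ m < k) → (N1 k ≤ m ∧ k < m) → ∀ x ∈ C, x ∉ b k) ∧
        (N0 ≤ m → ¬(K1 m ≤ k ∧ m < k) → ¬(N1 k ≤ m ∧ k < m) → C ∩ D ⊆ A) := by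
      intro m k
      by_cases h1 : K1 m ≤ k ∧ m < k
      · exact ⟨a m, (a m)ᶜ, haF m, hK1 m k h1.1, fun _ x hx => hx,
          fun h1' => absurd h1 h1', fun _ h1' => absurd h1 h1'⟩
      by_cases h2 : N1 k ≤ m ∧ k < m
      · exact ⟨(b k)ᶜ, b k, hN1 k m h2.1, hbG k, fun h1' => absurd h1' h1,
          fun _ _ x hx => hx, fun _ _ h2' => absurd h2 h2'⟩
      by_cases h3 : N0 ≤ m
      · by_cases h4 : A ∈ F m ⊓ G k
        · obtain ⟨C, hC, D, hD, hCD⟩ := Filter.mem_inf_iff.1 h4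
          exact ⟨C, D, hC, hD, fun h1' => absurd h1' h1, fun _ h2' => absurd h2' h2,
            fun _ _ _ => hCD ▸ subset_rfl⟩
        · have hnm : ¬ Mesh (F m) (G k) := fun hm' => h4 (hnb m k h3 hm')
          rw [Mesh] at hnm
          push_neg at hnm
          obtain ⟨C, hC, D, hD, hCD⟩ := hnm
          refine ⟨C, D, hC, hD, fun h1' => absurd h1' h1, fun _ h2' => absurd h2' h2,
            fun _ _ _ => ?_⟩
          rw [hCD]
          exact Set.empty_subset _
      · exact ⟨Set.univ, Set.univ, univ_mem, univ_mem, fun h1' => absurd h1' h1,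
          fun _ h2' => absurd h2' h2, fun h3' => absurd h3' h3⟩
    choose C D hCF hDG hkill1 hkill2 hkill3 using hwit
    -- the set W, in every F n for n ≥ N0, hence in the contour
    set W : Set X := A ∪ ⋃ m, (a (N0 + m) ∩
      ⋂ k' ∈ Finset.Iic (max (K1 (N0 + m)) (N0 + m)), C (N0 + m) k') with hWdef
    have hWF : W ∈ contourSeq F := by
      rw [mem_contourSeq]
      refine ⟨N0, fun n hn => ?_⟩
      obtain ⟨m, rfl⟩ : ∃ m, n = N0 + m := ⟨n - N0, by omega⟩
      refine mem_of_superset (inter_mem (haF (N0 + m))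
        ((Filter.biInter_finset_mem (Finset.Iic (max (K1 (N0 + m)) (N0 + m)))).2
          fun k' _ => hCF (N0 + m) k')) ?_
      intro x hx
      exact Or.inr (Set.mem_iUnion.2 ⟨m, hx⟩)
    obtain ⟨K, hK⟩ := mem_contourSeq.1 (h ▸ hWF)
    -- pick k ≥ K with A ∉ G k
    rw [mem_contourSeq] at hAG
    push_neg at hAG
    obtain ⟨k, hkK, hkA⟩ := hAG K
    apply hkA
    have hU : (W ∩ b k ∩ ⋂ j ∈ Finset.Iic (max (N1 k) k), D j k) ∈ G k :=
      inter_mem (inter_mem (hK k hkK) (hbG k))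
        ((Filter.biInter_finset_mem _).2 fun j _ => hDG j k)
    refine mem_of_superset hU ?_
    rintro x ⟨⟨hxW, hxb⟩, hxD⟩
    simp only [Set.mem_iInter, Finset.mem_Iic] at hxD
    by_contra hxA
    rcases hxW with hxA' | hxW
    · exact hxA hxA'
    obtain ⟨m', hx⟩ := Set.mem_iUnion.1 hxW
    obtain ⟨hxa, hxC⟩ := hx
    set m := N0 + m' with hm
    simp only [Set.mem_iInter, Finset.mem_Iic] at hxC
    have hmN0 : N0 ≤ m := by omega
    by_cases h1 : K1 m ≤ k ∧ m < k
    · exact hkill1 m k h1 x (hxD m (le_trans (le_of_lt h1.2) (le_max_right _ _))) hxa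
    by_cases h2 : N1 k ≤ m ∧ k < m
    · exact hkill2 m k h1 h2 x (hxC k (le_trans (le_of_lt h2.2) (le_max_right _ _))) hxb
    · apply hxA
      apply hkill3 m k hmN0 h1 h2
      have hk' : k ≤ max (K1 m) m := by
        by_cases hc : K1 m ≤ k
        · exact le_max_of_le_right (Nat.le_of_not_lt (fun hlt => h1 ⟨hc, hlt⟩))
        · exact le_max_of_le_left (Nat.lt_of_not_le hc).le
      have hm' : m ≤ max (N1 k) k := by
        by_cases hc : N1 k ≤ m
        · exact le_max_of_le_right (Nat.le_of_not_lt (fun hlt => h2 ⟨hc, hlt⟩))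
        · exact le_max_of_le_left (Nat.lt_of_not_le hc).le
      exact ⟨hxC k hk', hxD m hm'⟩
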